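/- Matrix Callebaut inequality (extreme bounds): for positive definite matrices A_1,...,A_m, B_1,...,B_m and any t ∈ [0,1], one has 2·(∑_j A_j♯B_j) ⊗ (∑_j A_j♯B_j) ≤ ∑_j (A_j ♯_t B_j) ⊗ ∑_j (A_j ♯_(1-t) B_j) + ∑_j (A_j ♯_(1-t) B_j) ⊗ ∑_j (A_j ♯_t B_j) ≤ ∑_j A_j ⊗ ∑_j B_j + ∑_j B_j ⊗ ∑_j A_j in the Loewner order. -/

import Mathlib

/-!
Write `Z = A^(-1/2) B A^(-1/2)` and `W = C^(-1/2) D C^(-1/2)`, so that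
`(A ♯ₐ B) ⊗ (C ♯_b D) = R (Zᵃ ⊗ Wᵇ) R` with `R = A^(1/2) ⊗ C^(1/2)`, and `A = A ♯₀ B`, `B = A ♯₁ B`.
The matrices `Zᵃ ⊗ Wᵇ` are simultaneously diagonalised by `U_Z ⊗ U_W`, with eigenvalues `zᵃ wᵇ`,
so a scalar inequality between sums of monomials `xᵃ yᵇ` on `x, y > 0` lifts to a Loewner
inequality between the corresponding sums of `(A ♯ₐ B) ⊗ (C ♯_b D)`. Both bounds are such scalar
inequalities: `2 √(xy) ≤ xᵗ y¹⁻ᵗ + x¹⁻ᵗ yᵗ` by AM-GM, and `xᵗ y¹⁻ᵗ + x¹⁻ᵗ yᵗ ≤ x + y` because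
`(xᵗ - yᵗ)(x¹⁻ᵗ - y¹⁻ᵗ) ≥ 0`. Summing over all pairs `(A_j, B_j), (A_k, B_k)` gives the theorem.
-/

open Matrix Finset
open scoped ComplexOrder

/-- Real power of a matrix via the spectral decomposition (junk value if not Hermitian). -/
noncomputable def mrpow {l : Type*} [Fintype l] [DecidableEq l] (A : Matrix l l ℂ) (r : ℝ) :
    Matrix l l ℂ :=
  if hA : A.IsHermitian then
    (hA.eigenvectorUnitary : Matrix l l ℂ) *
      Matrix.diagonal (fun i => ((hA.eigenvalues i ^ r : ℝ) : ℂ)) *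
      (star hA.eigenvectorUnitary : Matrix l l ℂ)
  else A

/-- Weighted matrix geometric mean `A ♯ₜ B = A^(1/2) (A^(-1/2) B A^(-1/2))^t A^(1/2)`. -/
noncomputable def wgmean {l : Type*} [Fintype l] [DecidableEq l] (A B : Matrix l l ℂ) (t : ℝ) :
    Matrix l l ℂ :=
  mrpow A (1/2) * mrpow (mrpow A (-(1/2)) * B * mrpow A (-(1/2))) t * mrpow A (1/2)

/-- Loewner order: `A ≤ B` iff `B - A` is positive semidefinite. -/
def loewnerLE {l : Type*} [Fintype l] [DecidableEq l] (A B : Matrix l l ℂ) : Prop :=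
  (B - A).PosSemidef

open Kronecker MatrixOrder

namespace Real

theorem two_mul_rpow_half_mul_rpow_half_le {x y : ℝ} (hx : 0 ≤ x) (hy : 0 ≤ y) (t : ℝ) :
    2 * (x ^ (1/2 : ℝ) * y ^ (1/2 : ℝ)) ≤ x ^ t * y ^ (1 - t) + x ^ (1 - t) * y ^ t := by
  have split (z : ℝ) (hz : 0 ≤ z) : z ^ t * z ^ (1 - t) = z ^ (1/2 : ℝ) * z ^ (1/2 : ℝ) := by
    rw [← rpow_add' hz (by norm_num), ← rpow_add' hz (by norm_num)]
    norm_num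
  have hprod : (x ^ t * y ^ (1 - t)) * (x ^ (1 - t) * y ^ t) =
      (x ^ (1/2 : ℝ) * y ^ (1/2 : ℝ)) ^ 2 := by
    linear_combination (y ^ t * y ^ (1 - t)) * split x hx +
      (x ^ (1/2 : ℝ) * x ^ (1/2 : ℝ)) * split y hy
  have hsum : 0 ≤ x ^ t * y ^ (1 - t) + x ^ (1 - t) * y ^ t := by positivity
  rw [← pow_le_pow_iff_left₀ (by positivity) hsum two_ne_zero]
  nlinarith [sq_nonneg (x ^ t * y ^ (1 - t) - x ^ (1 - t) * y ^ t)]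

theorem rpow_mul_rpow_add_le_add {x y t : ℝ} (hx : 0 ≤ x) (hy : 0 ≤ y) (ht₀ : 0 ≤ t)
    (ht₁ : t ≤ 1) : x ^ t * y ^ (1 - t) + x ^ (1 - t) * y ^ t ≤ x + y := by
  have hs : 0 ≤ 1 - t := by linarith
  have monovary : 0 ≤ (x ^ t - y ^ t) * (x ^ (1 - t) - y ^ (1 - t)) := by
    rcases le_total x y with hxy | hyx
    · exact mul_nonneg_of_nonpos_of_nonpos (sub_nonpos.2 (rpow_le_rpow hx hxy ht₀))
        (sub_nonpos.2 (rpow_le_rpow hx hxy hs))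
    · exact mul_nonneg (sub_nonneg.2 (rpow_le_rpow hy hyx ht₀))
        (sub_nonneg.2 (rpow_le_rpow hy hyx hs))
  have recombine (z : ℝ) (hz : 0 ≤ z) : z ^ t * z ^ (1 - t) = z := by
    rw [← rpow_add' hz (by norm_num)]
    norm_num
  linarith [recombine x hx, recombine y hy]

end Real

theorem sum_kronecker_sum {l ι : Type*} (s : Finset ι) (f g : ι → Matrix l l ℂ) :
    (∑ j ∈ s, f j) ⊗ₖ (∑ k ∈ s, g k) = ∑ j ∈ s, ∑ k ∈ s, f j ⊗ₖ g k := by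
  ext ⟨i₁, i₂⟩ ⟨j₁, j₂⟩
  simp only [kronecker_apply, Matrix.sum_apply, Finset.sum_mul_sum]

theorem sum_kronecker_sum_add_le {l ι : Type*} [Fintype l] (s : Finset ι)
    {f₁ g₁ f₂ g₂ f₃ g₃ f₄ g₄ : ι → Matrix l l ℂ}
    (h : ∀ j k, f₁ j ⊗ₖ g₁ k + f₂ j ⊗ₖ g₂ k ≤ f₃ j ⊗ₖ g₃ k + f₄ j ⊗ₖ g₄ k) :
    (∑ j ∈ s, f₁ j) ⊗ₖ (∑ j ∈ s, g₁ j) + (∑ j ∈ s, f₂ j) ⊗ₖ (∑ j ∈ s, g₂ j) ≤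
      (∑ j ∈ s, f₃ j) ⊗ₖ (∑ j ∈ s, g₃ j) + (∑ j ∈ s, f₄ j) ⊗ₖ (∑ j ∈ s, g₄ j) := by
  simp only [sum_kronecker_sum, ← Finset.sum_add_distrib]
  exact Finset.sum_le_sum fun j _ => Finset.sum_le_sum fun k _ => h j k

section

variable {l : Type*} [Fintype l] [DecidableEq l]

section mrpow

theorem mrpow_of_isHermitian {A : Matrix l l ℂ} (hA : A.IsHermitian) (r : ℝ) :
    mrpow A r = (hA.eigenvectorUnitary : Matrix l l ℂ) *
      diagonal (fun i => ((hA.eigenvalues i ^ r : ℝ) : ℂ)) *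
      (star hA.eigenvectorUnitary : Matrix l l ℂ) :=
  dif_pos hA

theorem isHermitian_mrpow {A : Matrix l l ℂ} (hA : A.IsHermitian) (r : ℝ) :
    (mrpow A r).IsHermitian := by
  rw [mrpow_of_isHermitian hA, star_eq_conjTranspose]
  exact isHermitian_mul_mul_conjTranspose (hA.eigenvectorUnitary : Matrix l l ℂ)
    (isHermitian_diagonal_of_self_adjoint _ (funext fun i => Complex.conj_ofReal _))

theorem mrpow_add {A : Matrix l l ℂ} (hA : A.PosDef) (r s : ℝ) :
    mrpow A (r + s) = mrpow A r * mrpow A s := by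
  have cancel : ∀ X : Matrix l l ℂ, (star hA.1.eigenvectorUnitary : Matrix l l ℂ) *
      ((hA.1.eigenvectorUnitary : Matrix l l ℂ) * X) = X := fun X => by
    rw [← mul_assoc, Unitary.coe_star_mul_self, one_mul]
  simp only [mrpow_of_isHermitian hA.1, mul_assoc, cancel]
  rw [← mul_assoc (diagonal _) (diagonal _), diagonal_mul_diagonal]
  simp only [← Complex.ofReal_mul, ← Real.rpow_add (hA.eigenvalues_pos _)]

theorem mrpow_zero {A : Matrix l l ℂ} (hA : A.IsHermitian) : mrpow A 0 = 1 := by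
  simp only [mrpow_of_isHermitian hA, Real.rpow_zero, Complex.ofReal_one, diagonal_one, mul_one]
  exact Unitary.coe_mul_star_self _

theorem mrpow_one {A : Matrix l l ℂ} (hA : A.IsHermitian) : mrpow A 1 = A := by
  simp only [mrpow_of_isHermitian hA, Real.rpow_one]
  exact hA.spectral_theorem.symm

theorem mrpow_half_mul_mrpow_half {A : Matrix l l ℂ} (hA : A.PosDef) :
    mrpow A (1/2) * mrpow A (1/2) = A := by
  rw [← mrpow_add hA]
  norm_num [mrpow_one hA.1]

theorem mrpow_half_mul_mrpow_neg_half {A : Matrix l l ℂ} (hA : A.PosDef) :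
    mrpow A (1/2) * mrpow A (-(1/2)) = 1 := by
  rw [← mrpow_add hA, add_neg_cancel, mrpow_zero hA.1]

theorem mrpow_neg_half_mul_mrpow_half {A : Matrix l l ℂ} (hA : A.PosDef) :
    mrpow A (-(1/2)) * mrpow A (1/2) = 1 := by
  rw [← mrpow_add hA, neg_add_cancel, mrpow_zero hA.1]

theorem isHermitian_mrpow_mul_mul_mrpow {A B : Matrix l l ℂ} (hA : A.IsHermitian)
    (hB : B.IsHermitian) (r : ℝ) : (mrpow A r * B * mrpow A r).IsHermitian := by
  simpa only [(isHermitian_mrpow hA r).eq] using isHermitian_mul_mul_conjTranspose (mrpow A r) hB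

theorem Matrix.PosDef.mrpow_neg_half_mul_mul_mrpow_neg_half {A B : Matrix l l ℂ} (hA : A.PosDef)
    (hB : B.PosDef) : (mrpow A (-(1/2)) * B * mrpow A (-(1/2))).PosDef := by
  have hinj : Function.Injective (mrpow A (-(1/2))).mulVec := by
    refine Function.LeftInverse.injective (g := (mrpow A (1/2)).mulVec) fun v => ?_
    rw [mulVec_mulVec, mrpow_half_mul_mrpow_neg_half hA, one_mulVec]
  simpa only [(isHermitian_mrpow hA.1 _).eq] using hB.conjTranspose_mul_mul_same hinj

end mrpow

section wgmean

variable {A B : Matrix l l ℂ}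

theorem wgmean_zero (hA : A.PosDef) (hB : B.IsHermitian) : wgmean A B 0 = A := by
  rw [wgmean, mrpow_zero (isHermitian_mrpow_mul_mul_mrpow hA.1 hB _), mul_one,
    mrpow_half_mul_mrpow_half hA]

theorem wgmean_one (hA : A.PosDef) (hB : B.IsHermitian) : wgmean A B 1 = B := by
  rw [wgmean, mrpow_one (isHermitian_mrpow_mul_mul_mrpow hA.1 hB _)]
  simp only [← mul_assoc, mrpow_half_mul_mrpow_neg_half hA, one_mul]
  rw [mul_assoc, mrpow_neg_half_mul_mrpow_half hA, mul_one]

end wgmean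

section kronCfc

variable {Z W : Matrix l l ℂ}

/-- The joint functional calculus `f(Z ⊗ 1, 1 ⊗ W)`, computed in the common eigenbasis
`U_Z ⊗ U_W` of `Z ⊗ 1` and `1 ⊗ W`. -/
noncomputable def kronCfc (hZ : Z.IsHermitian) (hW : W.IsHermitian) (f : ℝ → ℝ → ℝ) :
    Matrix (l × l) (l × l) ℂ :=
  ((hZ.eigenvectorUnitary : Matrix l l ℂ) ⊗ₖ (hW.eigenvectorUnitary : Matrix l l ℂ)) *
    diagonal (fun p => ((f (hZ.eigenvalues p.1) (hW.eigenvalues p.2) : ℝ) : ℂ)) *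
    ((hZ.eigenvectorUnitary : Matrix l l ℂ) ⊗ₖ (hW.eigenvectorUnitary : Matrix l l ℂ))ᴴ

theorem mrpow_kronecker_mrpow (hZ : Z.IsHermitian) (hW : W.IsHermitian) (a b : ℝ) :
    mrpow Z a ⊗ₖ mrpow W b = kronCfc hZ hW (fun x y => x ^ a * y ^ b) := by
  rw [mrpow_of_isHermitian hZ, mrpow_of_isHermitian hW, mul_kronecker_mul, mul_kronecker_mul,
    diagonal_kronecker_diagonal, kronCfc, conjTranspose_kronecker, ← star_eq_conjTranspose,
    ← star_eq_conjTranspose]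
  simp only [Complex.ofReal_mul]

theorem kronCfc_add (hZ : Z.IsHermitian) (hW : W.IsHermitian) (f g : ℝ → ℝ → ℝ) :
    kronCfc hZ hW f + kronCfc hZ hW g = kronCfc hZ hW (fun x y => f x y + g x y) := by
  simp only [kronCfc, ← add_mul, ← mul_add, diagonal_add, Complex.ofReal_add]

theorem kronCfc_mono (hZ : Z.IsHermitian) (hW : W.IsHermitian) {f g : ℝ → ℝ → ℝ}
    (hfg : ∀ i j,
      f (hZ.eigenvalues i) (hW.eigenvalues j) ≤ g (hZ.eigenvalues i) (hW.eigenvalues j)) :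
    kronCfc hZ hW f ≤ kronCfc hZ hW g := by
  rw [le_iff, kronCfc, kronCfc, ← sub_mul, ← mul_sub, diagonal_sub]
  refine PosSemidef.mul_mul_conjTranspose_same (PosSemidef.diagonal fun p => ?_) _
  rw [Pi.zero_apply, ← Complex.ofReal_sub, Complex.zero_le_real, sub_nonneg]
  exact hfg p.1 p.2

end kronCfc

theorem wgmean_kronecker_add_le_of_rpow {A B C D : Matrix l l ℂ} (hA : A.PosDef) (hB : B.PosDef)
    (hC : C.PosDef) (hD : D.PosDef) {a₁ b₁ a₂ b₂ a₃ b₃ a₄ b₄ : ℝ}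
    (h : ∀ x y : ℝ, 0 < x → 0 < y →
      x ^ a₁ * y ^ b₁ + x ^ a₂ * y ^ b₂ ≤ x ^ a₃ * y ^ b₃ + x ^ a₄ * y ^ b₄) :
    wgmean A B a₁ ⊗ₖ wgmean C D b₁ + wgmean A B a₂ ⊗ₖ wgmean C D b₂ ≤
      wgmean A B a₃ ⊗ₖ wgmean C D b₃ + wgmean A B a₄ ⊗ₖ wgmean C D b₄ := by
  have hZ := hA.mrpow_neg_half_mul_mul_mrpow_neg_half hB
  have hW := hC.mrpow_neg_half_mul_mul_mrpow_neg_half hD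
  set R := mrpow A (1/2) ⊗ₖ mrpow C (1/2)
  have hR : IsSelfAdjoint R := by
    rw [IsSelfAdjoint, star_eq_conjTranspose, conjTranspose_kronecker,
      (isHermitian_mrpow hA.1 _).eq, (isHermitian_mrpow hC.1 _).eq]
  have expand : ∀ a b, wgmean A B a ⊗ₖ wgmean C D b =
      R * kronCfc hZ.1 hW.1 (fun x y => x ^ a * y ^ b) * R := fun a b => by
    rw [wgmean, wgmean, mul_kronecker_mul, mul_kronecker_mul, mrpow_kronecker_mrpow hZ.1 hW.1]
  simp only [expand, ← mul_add, ← add_mul, kronCfc_add]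
  exact hR.conjugate_le_conjugate
    (kronCfc_mono hZ.1 hW.1 fun i j => h _ _ (hZ.eigenvalues_pos i) (hW.eigenvalues_pos j))

end

open Kronecker in
theorem callebaut_tensor_extreme {l : Type*} [Fintype l] [DecidableEq l] (m : ℕ)
    (A B : Fin m → Matrix l l ℂ) (hA : ∀ j, (A j).PosDef) (hB : ∀ j, (B j).PosDef)
    (t : ℝ) (ht0 : 0 ≤ t) (ht1 : t ≤ 1) :
    loewnerLE
      (2 • ((∑ j, wgmean (A j) (B j) (1/2)) ⊗ₖ (∑ j, wgmean (A j) (B j) (1/2))))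
      ((∑ j, wgmean (A j) (B j) t) ⊗ₖ (∑ j, wgmean (A j) (B j) (1 - t)) +
        (∑ j, wgmean (A j) (B j) (1 - t)) ⊗ₖ (∑ j, wgmean (A j) (B j) t)) ∧
    loewnerLE
      ((∑ j, wgmean (A j) (B j) t) ⊗ₖ (∑ j, wgmean (A j) (B j) (1 - t)) +
        (∑ j, wgmean (A j) (B j) (1 - t)) ⊗ₖ (∑ j, wgmean (A j) (B j) t))
      ((∑ j, A j) ⊗ₖ (∑ j, B j) + (∑ j, B j) ⊗ₖ (∑ j, A j)) := by
  have hA₀ : ∑ j, A j = ∑ j, wgmean (A j) (B j) 0 :=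
    Finset.sum_congr rfl fun j _ => (wgmean_zero (hA j) (hB j).1).symm
  have hB₁ : ∑ j, B j = ∑ j, wgmean (A j) (B j) 1 :=
    Finset.sum_congr rfl fun j _ => (wgmean_one (hA j) (hB j).1).symm
  constructor
  · rw [loewnerLE, ← le_iff, two_nsmul]
    refine sum_kronecker_sum_add_le _ fun j k =>
      wgmean_kronecker_add_le_of_rpow (hA j) (hB j) (hA k) (hB k) fun x y hx hy => ?_
    simpa only [two_mul] using Real.two_mul_rpow_half_mul_rpow_half_le hx.le hy.le t
  · rw [loewnerLE, ← le_iff, hA₀, hB₁]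
    refine sum_kronecker_sum_add_le _ fun j k =>
      wgmean_kronecker_add_le_of_rpow (hA j) (hB j) (hA k) (hB k) fun x y hx hy => ?_
    simpa only [Real.rpow_zero, Real.rpow_one, one_mul, mul_one, add_comm y] using
      Real.rpow_mul_rpow_add_le_add hx.le hy.le ht0 ht1
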